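/- Let p be a complex polynomial of degree 2. Then for every n ≥ 1, the sum of (p^n)'(z) over all fixed points z of p^n, each counted according to its multiplicity as a root of the polynomial p^{∘n}(X) − X, equals 2^n(2^n − 1). In particular, the sum of p'(ξ) over the fixed points of p (counted with multiplicity) equals 2. -/

import Mathlib

/-!
Conjugating a quadratic `p` by the translation to its critical point makes it even, and then so
is every iterate `f = p^{∘n}`, a polynomial of even degree `D = 2 ^ n`. The fixed-point polynomial
`f - X` differs from the even polynomial `f` only in its linear coefficient, so by Vieta the odd
elementary symmetric functions of its roots vanish below `D - 1`, while `e_{D-1} = 1 / lc f`.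
Newton's identities turn this into `p_k = 0` for the odd power sums with `k < D - 1` and
`p_{D-1} = (D - 1) / lc f`. As `f'` is odd, `∑ f'(r) = ∑_j f'_j p_j` collapses to
`D · lc f · p_{D-1} = D (D - 1)`.
-/

/-- The `n`-fold composition `p^{∘n}` of a polynomial with itself
(`p^{∘0} = X`). -/
noncomputable def polyIter (p : Polynomial ℂ) : ℕ → Polynomial ℂ
  | 0 => Polynomial.X
  | n + 1 => (polyIter p n).comp p

open Polynomial Finset

namespace Multiset

variable {R : Type*} [CommRing R]

theorem psum_eq_mul_esymm_sub_sum (s : Multiset R) {k : ℕ} (hk : 0 < k) :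
    (s.map (· ^ k)).sum = (-1) ^ (k + 1) * k * s.esymm k -
      ∑ a ∈ HasAntidiagonal.antidiagonal k with a.1 ∈ Set.Ioo 0 k,
        (-1) ^ a.1 * s.esymm a.1 * (s.map (· ^ a.2)).sum := by
  classical
  have aeval_psum (j : ℕ) : MvPolynomial.aeval (fun x : s => (x : R)) (MvPolynomial.psum s R j)
      = (s.map (· ^ j)).sum := by
    rw [MvPolynomial.psum, map_sum, Finset.sum_eq_multiset_sum]
    simp only [map_pow, MvPolynomial.aeval_X]
    exact congrArg Multiset.sum (map_univ_comp_coe s (· ^ j))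
  have h := congrArg (MvPolynomial.aeval (fun x : s => (x : R)))
    (MvPolynomial.psum_eq_mul_esymm_sub_sum s R k hk)
  simpa only [map_sub, map_mul, map_sum, map_pow, map_neg, map_one, map_natCast, aeval_psum,
    MvPolynomial.aeval_esymm_eq_multiset_esymm, map_univ_coe] using h

theorem psum_eq_mul_esymm_of_odd (s : Multiset R) {m : ℕ}
    (he : ∀ i, Odd i → i < m → s.esymm i = 0) {k : ℕ} (hk : Odd k) (hkm : k ≤ m) :
    (s.map (· ^ k)).sum = k * s.esymm k := by
  induction k using Nat.strong_induction_on with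
  | _ k ih =>
    rw [s.psum_eq_mul_esymm_sub_sum hk.pos, hk.add_one.neg_one_pow, one_mul, sub_eq_self]
    refine Finset.sum_eq_zero fun a ha => ?_
    obtain ⟨hsum, hpos, hlt⟩ : a.1 + a.2 = k ∧ 0 < a.1 ∧ a.1 < k := by simpa using ha
    rcases Nat.even_or_odd a.1 with heven | hodd
    · have hodd₂ : Odd a.2 := (Nat.odd_add'.mp (hsum ▸ hk)).mpr heven
      rw [ih a.2 (by omega) hodd₂ (by omega), he a.2 hodd₂ (by omega), mul_zero, mul_zero]
    · rw [he a.1 hodd (by omega), mul_zero, zero_mul]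

theorem sum_map_eval {S : Type*} [CommSemiring S] (s : Multiset S) {g : S[X]} {n : ℕ}
    (hg : g.natDegree < n) :
    (s.map g.eval).sum = ∑ j ∈ Finset.range n, g.coeff j * (s.map (· ^ j)).sum := by
  simp_rw [eval_eq_sum_range' hg]
  induction s using Multiset.induction_on with
  | empty => simp
  | cons a s ih => simp [ih, mul_add, sum_add_distrib]

end Multiset

namespace Polynomial

theorem coeff_natDegree_sub_eq_esymm_roots {R : Type*} [CommRing R] [IsDomain R] {p : R[X]}
    (hroots : Multiset.card p.roots = p.natDegree) {i : ℕ} (hi : i ≤ p.natDegree) :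
    p.coeff (p.natDegree - i) = p.leadingCoeff * (-1) ^ i * p.roots.esymm i := by
  rw [coeff_eq_esymm_roots_of_card hroots (Nat.sub_le _ _), Nat.sub_sub_self hi]

theorem coeff_eq_zero_of_comp_neg_X_eq_self {R : Type*} [CommRing R] [NoZeroDivisors R]
    [NeZero (2 : R)] {f : R[X]} (hf : f.comp (-X) = f) {j : ℕ} (hj : Odd j) : f.coeff j = 0 := by
  have h := congrArg (coeff · j) hf
  rw [show (-X : R[X]) = C (-1) * X by simp] at h
  simp only [comp_C_mul_X_coeff, hj.neg_one_pow] at h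
  have h2 : (2 : R) * f.coeff j = 0 := by linear_combination -h
  exact (mul_eq_zero.mp h2).resolve_left two_ne_zero

variable {K : Type*} [Field K]

theorem exists_translate_comp_neg_X_eq_self [NeZero (2 : K)] {p : K[X]} (hp : p.natDegree = 2) :
    ∃ m : K, (p.comp (X + C m) - C m).comp (-X) = p.comp (X + C m) - C m := by
  have ha : p.coeff 2 ≠ 0 := by
    rw [← hp, coeff_natDegree, leadingCoeff_ne_zero]; rintro rfl; simp at hp
  obtain ⟨m, hm⟩ : ∃ m, 2 * p.coeff 2 * m + p.coeff 1 = 0 :=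
    ⟨-p.coeff 1 / (2 * p.coeff 2), by field_simp; ring⟩
  refine ⟨m, ?_⟩
  replace hm : 2 * C (p.coeff 2) * C m + C (p.coeff 1) = 0 := by
    rw [← C_ofNat, ← C_mul, ← C_mul, ← C_add, hm, C_0]
  have hquad : p = C (p.coeff 2) * X ^ 2 + C (p.coeff 1) * X + C (p.coeff 0) := by
    conv_lhs => rw [as_sum_range_C_mul_X_pow p, hp]
    simp only [Nat.reduceAdd, sum_range_succ, range_one, sum_singleton, pow_zero, mul_one, pow_one]
    ring
  rw [sub_comp, C_comp, comp_assoc, add_comp, X_comp, C_comp, hquad]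
  simp only [add_comp, mul_comp, C_comp, pow_comp, X_comp]
  linear_combination (-2 * X) * hm

noncomputable def fixedPointMultiplierSum (f : K[X]) : K :=
  ((f - X).roots.map fun z => f.derivative.eval z).sum

theorem fixedPointMultiplierSum_translate (f : K[X]) (m : K) :
    fixedPointMultiplierSum (f.comp (X + C m) - C m) = fixedPointMultiplierSum f := by
  have hsub : f.comp (X + C m) - C m - X = (f - X).comp (C 1 * X + C m) := by
    rw [C_1, one_mul, sub_comp, X_comp]; ring
  have hroots := map_roots_comp_C_mul_X_add_C (f - X) 1 m isUnit_one
  rw [fixedPointMultiplierSum, fixedPointMultiplierSum, hsub, ← hroots, Multiset.map_map]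
  simp [derivative_comp]

theorem fixedPointMultiplierSum_of_comp_neg_X_eq_self [IsAlgClosed K] [NeZero (2 : K)]
    {f : K[X]} (hf : f.comp (-X) = f) (hD : 2 ≤ f.natDegree) :
    fixedPointMultiplierSum f = f.natDegree * (f.natDegree - 1) := by
  set D := f.natDegree
  set q := f - X
  have hqD : q.natDegree = D := natDegree_sub_eq_left_of_natDegree_lt (by rw [natDegree_X]; omega)
  have hqc : q.leadingCoeff = f.leadingCoeff := by
    rw [leadingCoeff, hqD, coeff_sub, coeff_X, if_neg (by omega), sub_zero, coeff_natDegree]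
  have hc : f.leadingCoeff ≠ 0 := leadingCoeff_ne_zero.mpr (by rintro rfl; simp [D] at hD)
  have hroots : Multiset.card q.roots = q.natDegree :=
    splits_iff_card_roots.mp (IsAlgClosed.splits q)
  have hDeven : Even D := by
    by_contra hodd
    exact hc (coeff_eq_zero_of_comp_neg_X_eq_self hf (Nat.not_even_iff_odd.mp hodd))
  have hodd_sub {i : ℕ} (hi : Odd i) (hiD : i < D) : Odd (D - i) :=
    Nat.Even.sub_odd hiD.le hDeven hi
  have he : ∀ i, Odd i → i < D - 1 → q.roots.esymm i = 0 := by
    intro i hi hiD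
    have h := coeff_natDegree_sub_eq_esymm_roots hroots (i := i) (by omega)
    rw [hqD, coeff_sub, coeff_X, if_neg (by omega), sub_zero,
      coeff_eq_zero_of_comp_neg_X_eq_self hf (hodd_sub hi (by omega))] at h
    simpa [hqc, hc] using h
  have htop : q.roots.esymm (D - 1) = f.leadingCoeff⁻¹ := by
    have h := coeff_natDegree_sub_eq_esymm_roots hroots (i := D - 1) (by omega)
    rw [hqD, Nat.sub_sub_self (by omega), coeff_sub, coeff_X_one,
      coeff_eq_zero_of_comp_neg_X_eq_self hf odd_one,
      (hodd_sub odd_one (by omega)).neg_one_pow, hqc] at h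
    field_simp
    linear_combination h
  have hpsum (j : ℕ) (hj : Odd j) (hjD : j ≤ D - 1) :
      (q.roots.map (· ^ j)).sum = j * q.roots.esymm j :=
    q.roots.psum_eq_mul_esymm_of_odd he hj hjD
  rw [fixedPointMultiplierSum, q.roots.sum_map_eval (natDegree_derivative_lt (by omega)),
    Finset.sum_eq_single_of_mem (D - 1) (by simp; omega)]
  · rw [coeff_derivative, hpsum _ (hodd_sub odd_one (by omega)) le_rfl, htop,
      Nat.sub_add_cancel (by omega), coeff_natDegree, Nat.cast_sub (by omega)]
    field_simp
    push_cast
    ring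
  · intro j hj hne
    rw [Finset.mem_range] at hj
    rcases Nat.even_or_odd j with heven | hodd
    · rw [coeff_derivative, coeff_eq_zero_of_comp_neg_X_eq_self hf heven.add_one, zero_mul,
        zero_mul]
    · rw [hpsum j hodd (by omega), he j hodd (by omega), mul_zero, mul_zero]

end Polynomial

section polyIter

variable (p : ℂ[X])

@[simp] theorem polyIter_zero : polyIter p 0 = X := rfl

theorem polyIter_succ (n : ℕ) : polyIter p (n + 1) = (polyIter p n).comp p := rfl

@[simp] theorem polyIter_one : polyIter p 1 = p := X_comp

theorem eval_derivative_polyIter (n : ℕ) (z : ℂ) :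
    (polyIter p n).derivative.eval z =
      ∏ k ∈ range n, p.derivative.eval ((fun w => p.eval w)^[k] z) := by
  induction n generalizing z with
  | zero => simp
  | succ n ih =>
    rw [polyIter_succ, derivative_comp, eval_mul, eval_comp, ih, prod_range_succ', mul_comm]
    simp [Function.iterate_succ_apply]

theorem natDegree_polyIter {d : ℕ} (hp : p.natDegree = d) (n : ℕ) :
    (polyIter p n).natDegree = d ^ n := by
  induction n with
  | zero => simp
  | succ n ih => rw [polyIter_succ, natDegree_comp, ih, hp, pow_succ]

theorem polyIter_translate (m : ℂ) (n : ℕ) :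
    polyIter (p.comp (X + C m) - C m) n = (polyIter p n).comp (X + C m) - C m := by
  induction n with
  | zero => simp
  | succ n ih =>
    rw [polyIter_succ, polyIter_succ, ih, sub_comp, C_comp, comp_assoc, comp_assoc, add_comp,
      X_comp, C_comp, sub_add_cancel]

variable {p}

theorem polyIter_comp_neg_X (hp : p.comp (-X) = p) {n : ℕ} (hn : n ≠ 0) :
    (polyIter p n).comp (-X) = polyIter p n := by
  obtain ⟨n, rfl⟩ := Nat.exists_eq_succ_of_ne_zero hn
  rw [polyIter_succ, comp_assoc, hp]

theorem fixedPointMultiplierSum_polyIter (hp : p.natDegree = 2) {n : ℕ} (hn : n ≠ 0) :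
    fixedPointMultiplierSum (polyIter p n) = 2 ^ n * (2 ^ n - 1) := by
  obtain ⟨m, hm⟩ := exists_translate_comp_neg_X_eq_self hp
  have hdeg : (polyIter (p.comp (X + C m) - C m) n).natDegree = 2 ^ n :=
    natDegree_polyIter _ (by rw [natDegree_sub_C, natDegree_comp, natDegree_X_add_C, hp]) n
  rw [← fixedPointMultiplierSum_translate _ m, ← polyIter_translate,
    fixedPointMultiplierSum_of_comp_neg_X_eq_self (polyIter_comp_neg_X hm hn), hdeg]
  · push_cast; ring
  · rw [hdeg]; exact Nat.le_self_pow hn 2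

end polyIter

theorem stmt_12 (p : Polynomial ℂ) (hp : p.natDegree = 2) :
    (∀ n : ℕ, 1 ≤ n →
      ((polyIter p n - Polynomial.X).roots.map
        (fun z => ∏ k ∈ Finset.range n,
          p.derivative.eval ((fun w => p.eval w)^[k] z))).sum
      = (2 : ℂ) ^ n * ((2 : ℂ) ^ n - 1)) ∧
    ((p - Polynomial.X).roots.map (fun z => p.derivative.eval z)).sum = 2 := by
  refine ⟨fun n hn => ?_, ?_⟩
  · simp_rw [← eval_derivative_polyIter]
    exact fixedPointMultiplierSum_polyIter hp (by omega)
  · have h := fixedPointMultiplierSum_polyIter hp one_ne_zero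
    norm_num [fixedPointMultiplierSum] at h
    exact h
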